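/- arXiv:2201.00496 — 2 statements merged into one kernel-verified Lean document; each statement's English description precedes it below -/
import Mathlib

section
/- Fix two voters N = {1, 2}, a path-connected domain D and a strategy-proof rule f : D^2 → A. If C = (x_1, …, x_v, x_1) with v ≥ 3 is a cycle in the adjacency graph G_∼ (i.e., x_1, …, x_v are pairwise distinct and x_k ∼ x_{k+1} for all k ∈ {1, …, v}, where x_{v+1} = x_1), then f behaves like a dictatorship on {x_1, …, x_v}. -/
/-!
Say that voter `i` vetoes `b` at `a` if no profile in which `i` has peak `a` yields `b`.
On an edge `a ∼ b`, strategy-proofness at the two witnessing preferences forces the outcome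
to be `a` or `b`, so either voter `i` vetoes `b` at `a` or the other voter vetoes `a` at `b`.
Along two consecutive edges `a ∼ c ∼ b` with `a ≠ b`, voter `i` vetoing `c` at `a` and the
other voter vetoing `c` at `b` are incompatible: swapping the two top alternatives of the
witnesses, one voter at a time, chains the outcomes into `a = b`. Hence a veto of one voter
along an edge propagates around the cycle, all in one direction. Finally, a voter who vetoes
the successor of every vertex of the cycle obtains his peak whenever both peaks lie on the
cycle, by induction on the distance from his peak to the other one.
-/

open Classical

set_option linter.unusedSectionVars false
set_option linter.unusedVariables false

/-- A strict preference over `A`, represented as a ranking bijection: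
`P k` is the `(k+1)`-th ranked alternative. -/
abbrev Pref (A : Type*) [Fintype A] := Fin (Fintype.card A) ≃ A

variable {A : Type*} [Fintype A] [DecidableEq A] [Nonempty A]

/-- `rk P k` : the `(k+1)`-th ranked alternative of `P` (0-indexed, so `rk P 0 = r₁(P)`). -/
noncomputable def rk (P : Pref A) (k : ℕ) : A :=
  if h : k < Fintype.card A then P ⟨k, h⟩ else Classical.arbitrary A

/-- The peak `r₁(P)`. -/
noncomputable def peak (P : Pref A) : A := rk P 0

/-- The second-ranked alternative `r₂(P)`. -/
noncomputable def second (P : Pref A) : A := rk P 1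

/-- `a` is strictly preferred to `b` under `P`. -/
def prefers (P : Pref A) (a b : A) : Prop := P.symm a < P.symm b

/-- Two preferences are completely reversed. -/
def Reversed (P P' : Pref A) : Prop := ∀ a b : A, prefers P a b ↔ prefers P' b a

/-- A profile lies in the domain `D`. -/
def InDom (D : Set (Pref A)) {n : ℕ} (P : Fin n → Pref A) : Prop := ∀ i, P i ∈ D

/-- Unanimity (an SCF satisfying it is called a rule). -/
def IsRule (D : Set (Pref A)) {n : ℕ} (f : (Fin n → Pref A) → A) : Prop :=
  ∀ P : Fin n → Pref A, InDom D P → ∀ a : A, (∀ i, peak (P i) = a) → f P = a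

/-- Strategy-proofness (relative to the domain `D`). -/
def StrategyProof (D : Set (Pref A)) {n : ℕ} (f : (Fin n → Pref A) → A) : Prop :=
  ∀ P : Fin n → Pref A, InDom D P → ∀ i : Fin n, ∀ Q ∈ D,
    f P = f (Function.update P i Q) ∨ prefers (P i) (f P) (f (Function.update P i Q))

/-- The tops-only property. -/
def TopsOnly (D : Set (Pref A)) {n : ℕ} (f : (Fin n → Pref A) → A) : Prop :=
  ∀ P P' : Fin n → Pref A, InDom D P → InDom D P' →
    (∀ i, peak (P i) = peak (P' i)) → f P = f P'

/-- Anonymity. -/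
def Anonymous (D : Set (Pref A)) {n : ℕ} (f : (Fin n → Pref A) → A) : Prop :=
  ∀ P : Fin n → Pref A, InDom D P → ∀ σ : Equiv.Perm (Fin n), f (P ∘ σ) = f P

/-- `f` behaves like a dictatorship on `B`. -/
def DictatorOn (D : Set (Pref A)) {n : ℕ} (f : (Fin n → Pref A) → A) (B : Set A) : Prop :=
  ∃ i : Fin n, ∀ P : Fin n → Pref A, InDom D P → (∀ j, peak (P j) ∈ B) → f P = peak (P i)

/-- `f` is a dictatorship. -/
def Dictatorship (D : Set (Pref A)) {n : ℕ} (f : (Fin n → Pref A) → A) : Prop :=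
  DictatorOn D f Set.univ

/-- A dictatorial domain. -/
def DictatorialDomain (D : Set (Pref A)) : Prop :=
  ∀ n : ℕ, 2 ≤ n → ∀ f : (Fin n → Pref A) → A,
    IsRule D f → StrategyProof D f → Dictatorship D f

/-- A tops-only domain. -/
def TopsOnlyDomain (D : Set (Pref A)) : Prop :=
  ∀ n : ℕ, 2 ≤ n → ∀ f : (Fin n → Pref A) → A,
    IsRule D f → StrategyProof D f → TopsOnly D f

/-- Adjacency of two alternatives relative to the domain `D`. -/
def DomAdjacent (D : Set (Pref A)) (a b : A) : Prop :=
  ∃ P ∈ D, ∃ P' ∈ D, peak P = a ∧ second P = b ∧ peak P' = b ∧ second P' = a ∧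
    ∀ k : ℕ, 2 ≤ k → rk P k = rk P' k

/-- The adjacency graph `G_∼` of the domain `D`. -/
noncomputable def adjGraph (D : Set (Pref A)) : SimpleGraph A :=
  SimpleGraph.fromRel (DomAdjacent D)

/-- Path-connectedness of the domain. -/
def PathConnectedDom (D : Set (Pref A)) : Prop := (adjGraph D).Connected

/-- Diversity: the domain contains two completely reversed preferences. -/
def Diversity (D : Set (Pref A)) : Prop := ∃ P ∈ D, ∃ P' ∈ D, Reversed P P'

/-- `S(D^a)`: the set of alternatives second-ranked in some preference of `D` with peak `a`. -/
def secondsSet (D : Set (Pref A)) (a : A) : Set A := {b | ∃ P ∈ D, peak P = a ∧ second P = b}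

/-- Leaf symmetry. -/
def LeafSymmetry (D : Set (Pref A)) : Prop :=
  ∀ x : A, (∃! y, (adjGraph D).Adj x y) →
    (∃ u ∈ secondsSet D x, ∃ v ∈ secondsSet D x, u ≠ v) →
    ∃ z ∈ secondsSet D x, ¬ (adjGraph D).Adj x z ∧ x ∈ secondsSet D z

/-- Unidimensionality: path-connectedness, diversity and leaf symmetry. -/
def Unidimensional (D : Set (Pref A)) : Prop :=
  PathConnectedDom D ∧ Diversity D ∧ LeafSymmetry D

/-- The unique seconds property. -/
def UniqueSeconds (D : Set (Pref A)) : Prop := ∃ x b : A, secondsSet D x = {b}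

/-- Minimal richness. -/
def MinimallyRich (D : Set (Pref A)) : Prop := ∀ a : A, ∃ P ∈ D, peak P = a

/-- The vertex set `⟨x, y|T⟩` of the (in a tree, unique) shortest path between `x` and `y`. -/
def intv (T : SimpleGraph A) (x y : A) : Set A :=
  {z | T.dist x z + T.dist z y = T.dist x y}

/-- `a'` is the projection of `a` onto `B` in `T`. -/
def IsProjPt (T : SimpleGraph A) (B : Set A) (a a' : A) : Prop :=
  a' ∈ B ∧ ∀ b ∈ B, a' ∈ intv T a b

/-- The projection `Proj(a, B)` of `a` onto a path-closed set `B` in the tree `T`. -/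
noncomputable def projOn (T : SimpleGraph A) (B : Set A) (a : A) : A :=
  if h : ∃ a', IsProjPt T B a a' then h.choose else a

/-- `Γ(P)`: the vertex set of the minimal subtree of `T` spanning all the peaks. -/
def gammaSet (T : SimpleGraph A) {n : ℕ} (P : Fin n → Pref A) : Set A :=
  {c | ∃ i j : Fin n, c ∈ intv T (peak (P i)) (peak (P j))}

/-- The projection rule on `T` w.r.t. `xbar`. -/
noncomputable def projRule (T : SimpleGraph A) (xbar : A) {n : ℕ}
    (P : Fin n → Pref A) : A :=
  projOn T (gammaSet T P) xbar

/-- Single-peakedness on a tree. -/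
def SinglePeaked (T : SimpleGraph A) (P : Pref A) : Prop :=
  ∀ c d : A, c ≠ d → c ∈ intv T (peak P) d → prefers P c d

/-- Semi-single-peakedness on `T` w.r.t. the threshold `xbar`. -/
def SemiSP (T : SimpleGraph A) (xbar : A) (P : Pref A) : Prop :=
  (∀ c d : A, c ∈ intv T (peak P) xbar → d ∈ intv T (peak P) xbar → c ≠ d →
    c ∈ intv T (peak P) d → prefers P c d) ∧
  (∀ c : A, c ∉ intv T (peak P) xbar →
    prefers P (projOn T (intv T (peak P) xbar) c) c)

/-- A semi-single-peaked domain. -/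
def SemiSPDomain (D : Set (Pref A)) : Prop :=
  ∃ (T : SimpleGraph A) (xbar : A), T.IsTree ∧
    D ⊆ {P | SemiSP T xbar P} ∧ (adjGraph D).Connected

/-- `A^{a⇀b}`: the alternatives whose path to `b` goes through `a`. -/
def sideSet (T : SimpleGraph A) (a b : A) : Set A := {z | a ∈ intv T z b}

/-- `x = max^P(B)`: `x` is `P`'s best alternative of `B`. -/
def IsBestOf (P : Pref A) (x : A) (B : Set A) : Prop :=
  x ∈ B ∧ ∀ y ∈ B, y ≠ x → prefers P x y

/-- `a` and `b` are dual-thresholds in the tree `T`. -/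
def DualThresholds (T : SimpleGraph A) (a b : A) : Prop :=
  a ≠ b ∧ ∀ c : A, c ∉ intv T a b →
    projOn T (intv T a b) c = a ∨ projOn T (intv T a b) c = b

/-- An `(a,b)`-semi-hybrid preference on `T`. -/
def SemiHybridPref (T : SimpleGraph A) (a b : A) (P : Pref A) : Prop :=
  (peak P ∈ sideSet T a b \ {a} → SemiSP T a P ∧ IsBestOf P b (sideSet T b a)) ∧
  (peak P ∈ sideSet T b a \ {b} → SemiSP T b P ∧ IsBestOf P a (sideSet T a b)) ∧
  (peak P ∈ intv T a b → IsBestOf P a (sideSet T a b) ∧ IsBestOf P b (sideSet T b a))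

/-- `x` is a leaf of the subgraph of `G` induced on `B`. -/
def IsLeafOn (G : SimpleGraph A) (B : Set A) (x : A) : Prop :=
  x ∈ B ∧ ∃! y, y ∈ B ∧ G.Adj x y

/-- `D` is an `(a,b)`-semi-hybrid domain on the tree `T`. -/
def SemiHybridDomainOn (D : Set (Pref A)) (T : SimpleGraph A) (a b : A) : Prop :=
  T.IsTree ∧ DualThresholds T a b ∧ D ⊆ {P | SemiHybridPref T a b P} ∧
  (adjGraph D).Connected ∧
  (¬ ∃ (T' : SimpleGraph A) (a' b' : A), T'.IsTree ∧ DualThresholds T' a' b' ∧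
      D ⊆ {P | SemiHybridPref T' a' b' P} ∧ intv T' a' b' ⊂ intv T a b) ∧
  ((adjGraph D).IsTree →
    ∀ x : A, IsLeafOn (adjGraph D) (intv T a b) x →
      ∃ P ∈ D, ¬ SemiSP (adjGraph D) x P)

/-- `D` is a semi-hybrid domain. -/
def SemiHybridDomain (D : Set (Pref A)) : Prop :=
  ∃ (T : SimpleGraph A) (a b : A), SemiHybridDomainOn D T a b

/-- An `(a,b)`-hybrid preference on `T`. -/
def HybridPref (T : SimpleGraph A) (a b : A) (P : Pref A) : Prop :=
  (∀ y z : A, ((y ∈ sideSet T a b ∧ z ∈ sideSet T a b) ∨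
      (y ∈ sideSet T b a ∧ z ∈ sideSet T b a)) → y ≠ z →
    y ∈ intv T (peak P) z → prefers P y z) ∧
  (peak P ∈ sideSet T a b \ {a} → IsBestOf P a (intv T a b)) ∧
  (peak P ∈ sideSet T b a \ {b} → IsBestOf P b (intv T a b))

/-- `D` is an `(a,b)`-hybrid domain on the tree `T`. -/
def HybridDomainOn (D : Set (Pref A)) (T : SimpleGraph A) (a b : A) : Prop :=
  T.IsTree ∧ DualThresholds T a b ∧ D ⊆ {P | HybridPref T a b P} ∧
  (adjGraph D).Connected ∧
  (¬ ∃ (T' : SimpleGraph A) (a' b' : A), T'.IsTree ∧ DualThresholds T' a' b' ∧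
      D ⊆ {P | HybridPref T' a' b' P} ∧ intv T' a' b' ⊂ intv T a b) ∧
  3 ≤ (intv T a b).ncard

/-- `f` is an `(a,b)`-hybrid rule on the tree `T`. -/
def IsHybridRule (D : Set (Pref A)) {n : ℕ} (f : (Fin n → Pref A) → A)
    (T : SimpleGraph A) (a b : A) : Prop :=
  T.IsTree ∧ DualThresholds T a b ∧ 3 ≤ (intv T a b).ncard ∧
  ∃ i : Fin n, ∀ P : Fin n → Pref A, InDom D P →
    (peak (P i) ∈ intv T a b → f P = peak (P i)) ∧
    (peak (P i) ∈ sideSet T a b \ {a} → f P = projOn T (gammaSet T P) a) ∧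
    (peak (P i) ∈ sideSet T b a \ {b} → f P = projOn T (gammaSet T P) b)

/-- The PNT rule on `T` w.r.t. the edge `(x, y)`, with the two distinguished voters `i, j`. -/
noncomputable def pntRule (T : SimpleGraph A) (x y : A) {n : ℕ} (i j : Fin n)
    (P : Fin n → Pref A) : A :=
  if peak (P i) ∈ sideSet T y x then peak (P i)
  else if peak (P j) ∈ sideSet T x y then projOn T (gammaSet T P) x
  else if prefers (P j) x y then x else y

/-- `(x, y)` is a critical spot in `T` for the domain `D`. -/
def CriticalSpot (D : Set (Pref A)) (T : SimpleGraph A) (x y : A) : Prop :=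
  T.Adj x y ∧
  (∀ P ∈ D, peak P ∈ sideSet T x y → SemiSP T y P) ∧
  (∀ P ∈ D, peak P ∈ sideSet T y x → IsBestOf P x (sideSet T x y)) ∧
  (∃ P ∈ D, ∃ P' ∈ D, peak P = peak P' ∧ peak P ∈ sideSet T y x ∧
    prefers P y x ∧ prefers P' x y)

/-- `x` is a path in the graph `G` (pairwise distinct, consecutive vertices adjacent). -/
def IsPathIn (G : SimpleGraph A) {v : ℕ} (x : Fin v → A) : Prop :=
  Function.Injective x ∧
  ∀ (k : ℕ) (h : k + 1 < v), G.Adj (x ⟨k, Nat.lt_of_succ_lt h⟩) (x ⟨k + 1, h⟩)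

/-- `x` is a cycle in the graph `G`. -/
def IsCycleIn (G : SimpleGraph A) {v : ℕ} (x : Fin v → A) : Prop :=
  Function.Injective x ∧
  (∀ (k : ℕ) (h : k + 1 < v), G.Adj (x ⟨k, Nat.lt_of_succ_lt h⟩) (x ⟨k + 1, h⟩)) ∧
  ∀ (h : 0 < v), G.Adj (x ⟨v - 1, Nat.sub_lt h Nat.one_pos⟩) (x ⟨0, h⟩)

/-- The line `L^A` induced by the ranking of the preference `P`. -/
noncomputable def lineOf (P : Pref A) : SimpleGraph A :=
  SimpleGraph.fromRel (fun a b =>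
    ∃ k : ℕ, k + 1 < Fintype.card A ∧ rk P k = a ∧ rk P (k + 1) = b)

/-- The median of three natural numbers. -/
def med3 (a b c : ℕ) : ℕ := max (min a b) (min (max a b) c)

/-- The two-voter profile in which voter `i` reports `Pi` and the other voter reports `Q`. -/
noncomputable def prof2 (i : Fin 2) (Pi Q : Pref A) : Fin 2 → Pref A :=
  Function.update (fun _ => Q) i Pi

lemma rk_eq (P : Pref A) {k : ℕ} (h : k < Fintype.card A) : rk P k = P ⟨k, h⟩ := dif_pos h

lemma symm_peak (P : Pref A) : P.symm (peak P) = ⟨0, Fintype.card_pos⟩ := by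
  rw [peak, rk_eq P Fintype.card_pos, P.symm_apply_apply]

lemma not_prefers_peak (P : Pref A) (z : A) : ¬ prefers P z (peak P) := by
  simp [prefers, symm_peak]

lemma eq_peak_of_prefers_second (hA : 1 < Fintype.card A) {P : Pref A} {z : A}
    (h : prefers P z (second P)) : z = peak P := by
  rw [prefers, second, rk_eq P hA, P.symm_apply_apply, Fin.lt_def] at h
  rw [peak, rk_eq P Fintype.card_pos, ← P.apply_symm_apply z]
  exact congrArg P (Fin.ext (by dsimp only at h ⊢; omega))

lemma peak_ne_second (hA : 1 < Fintype.card A) (P : Pref A) : peak P ≠ second P := by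
  rw [peak, second, rk_eq P Fintype.card_pos, rk_eq P hA, Ne, P.apply_eq_iff_eq]
  simp

lemma Fin.eq_zero_and_eq_one_of_lt_of_swap_lt {m : ℕ} (hm : 1 < m) {a b : Fin m} (hab : a < b)
    (hba : Equiv.swap ⟨0, by omega⟩ ⟨1, hm⟩ b < Equiv.swap ⟨0, by omega⟩ ⟨1, hm⟩ a) :
    a = ⟨0, by omega⟩ ∧ b = ⟨1, hm⟩ := by
  simp only [Equiv.swap_apply_def] at hba
  rw [Fin.lt_def] at hab
  split_ifs at hba <;> simp only [Fin.ext_iff, Fin.lt_def] at * <;> omega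

lemma eq_swap_trans_of_swaps_top_two (hA : 1 < Fintype.card A) {P P' : Pref A}
    (hp : peak P' = second P) (hs : second P' = peak P)
    (ht : ∀ k, 2 ≤ k → rk P k = rk P' k) :
    P' = (Equiv.swap ⟨0, by omega⟩ ⟨1, hA⟩).trans P := by
  ext ⟨k, hk⟩
  simp only [peak, second, rk_eq _ Fintype.card_pos, rk_eq _ hA] at hp hs
  rcases k with _ | _ | k
  · simpa using hp
  · simpa using hs
  · have hne0 : (⟨k + 2, hk⟩ : Fin _) ≠ ⟨0, by omega⟩ := by simp [Fin.ext_iff]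
    have hne1 : (⟨k + 2, hk⟩ : Fin _) ≠ ⟨1, hA⟩ := by simp [Fin.ext_iff]
    rw [Equiv.trans_apply, Equiv.swap_apply_of_ne_of_ne hne0 hne1, ← rk_eq, ← rk_eq,
      ht _ (by omega)]

lemma eq_peak_and_eq_second_of_swaps_top_two (hA : 1 < Fintype.card A) {P P' : Pref A}
    (hp : peak P' = second P) (hs : second P' = peak P)
    (ht : ∀ k, 2 ≤ k → rk P k = rk P' k) {u w : A}
    (hu : prefers P u w) (hw : prefers P' w u) : u = peak P ∧ w = second P := by
  rw [eq_swap_trans_of_swaps_top_two hA hp hs ht] at hw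
  simp only [prefers, Equiv.symm_trans_apply, Equiv.symm_swap] at hu hw
  obtain ⟨hu0, hw1⟩ := Fin.eq_zero_and_eq_one_of_lt_of_swap_lt hA hu hw
  rw [peak, second, rk_eq P Fintype.card_pos, rk_eq P hA, ← hu0, ← hw1]
  simp

section TwoVoters

variable {i j : Fin 2}

lemma Fin.two_eq_or_eq_of_ne (hij : i ≠ j) (k : Fin 2) : k = i ∨ k = j := by
  revert i j k; decide

lemma prof2_self (i : Fin 2) (P Q : Pref A) : prof2 i P Q i = P := Function.update_self ..

lemma prof2_of_ne (hij : i ≠ j) (P Q : Pref A) : prof2 i P Q j = Q :=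
  Function.update_of_ne hij.symm ..

lemma prof2_comm (hij : i ≠ j) (P Q : Pref A) : prof2 i P Q = prof2 j Q P := by
  funext k
  rcases Fin.two_eq_or_eq_of_ne hij k with rfl | rfl
  · rw [prof2_self, prof2_of_ne hij.symm]
  · rw [prof2_self, prof2_of_ne hij]

lemma prof2_eta (hij : i ≠ j) (R : Fin 2 → Pref A) :
    prof2 i (R i) (R j) = R := by
  funext k
  rcases Fin.two_eq_or_eq_of_ne hij k with rfl | rfl
  · rw [prof2_self]
  · rw [prof2_of_ne hij]

lemma update_prof2_self (i : Fin 2) (P P' Q : Pref A) :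
    Function.update (prof2 i P Q) i P' = prof2 i P' Q :=
  Function.update_idem ..

lemma inDom_prof2 {D : Set (Pref A)} (i : Fin 2) {P Q : Pref A} (hP : P ∈ D) (hQ : Q ∈ D) :
    InDom D (prof2 i P Q) := by
  intro k
  by_cases hk : k = i
  · rw [hk, prof2_self]; exact hP
  · rw [prof2_of_ne (Ne.symm hk)]; exact hQ

variable {D : Set (Pref A)} {f : (Fin 2 → Pref A) → A} {P P' Q : Pref A}

lemma IsRule.apply_prof2 (hrule : IsRule D f) (i : Fin 2) (hP : P ∈ D) (hQ : Q ∈ D)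
    (h : peak Q = peak P) : f (prof2 i P Q) = peak P := by
  refine hrule _ (inDom_prof2 i hP hQ) _ fun k => ?_
  by_cases hk : k = i
  · rw [hk, prof2_self]
  · rw [prof2_of_ne (Ne.symm hk), h]

namespace StrategyProof

lemma apply_prof2_eq_or_prefers (hsp : StrategyProof D f) (i : Fin 2) (hP : P ∈ D)
    (hP' : P' ∈ D) (hQ : Q ∈ D) :
    f (prof2 i P Q) = f (prof2 i P' Q) ∨ prefers P (f (prof2 i P Q)) (f (prof2 i P' Q)) := by
  simpa only [update_prof2_self, prof2_self] using hsp _ (inDom_prof2 i hP hQ) i P' hP'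

lemma apply_prof2_eq_peak (hsp : StrategyProof D f) (i : Fin 2) (hP : P ∈ D)
    (hP' : P' ∈ D) (hQ : Q ∈ D) (h : f (prof2 i P' Q) = peak P) : f (prof2 i P Q) = peak P := by
  rcases hsp.apply_prof2_eq_or_prefers i hP hP' hQ with heq | hpref
  · exact heq.trans h
  · exact absurd (h ▸ hpref) (not_prefers_peak P _)

lemma apply_prof2_eq_peak_or_eq_second (hsp : StrategyProof D f) (i : Fin 2)
    (hA : 1 < Fintype.card A) (hP : P ∈ D) (hP' : P' ∈ D) (hQ : Q ∈ D)
    (h : f (prof2 i P' Q) = second P) :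
    f (prof2 i P Q) = peak P ∨ f (prof2 i P Q) = second P := by
  rcases hsp.apply_prof2_eq_or_prefers i hP hP' hQ with heq | hpref
  · exact Or.inr (heq.trans h)
  · exact Or.inl (eq_peak_of_prefers_second hA (h ▸ hpref))

lemma apply_prof2_eq_or_eq_peaks_of_swaps_top_two (hsp : StrategyProof D f) (i : Fin 2)
    (hA : 1 < Fintype.card A) (hP : P ∈ D) (hP' : P' ∈ D) (hQ : Q ∈ D)
    (hp : peak P' = second P) (hs : second P' = peak P)
    (ht : ∀ k, 2 ≤ k → rk P k = rk P' k) :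
    f (prof2 i P Q) = f (prof2 i P' Q) ∨
      f (prof2 i P Q) = peak P ∧ f (prof2 i P' Q) = peak P' := by
  rcases hsp.apply_prof2_eq_or_prefers i hP hP' hQ with heq | hpref
  · exact Or.inl heq
  rcases hsp.apply_prof2_eq_or_prefers i hP' hP hQ with heq | hpref'
  · exact Or.inl heq.symm
  rw [hp]
  exact Or.inr (eq_peak_and_eq_second_of_swaps_top_two hA hp hs ht hpref hpref')

end StrategyProof

end TwoVoters

lemma DomAdjacent.symm {D : Set (Pref A)} {a b : A} (h : DomAdjacent D a b) :
    DomAdjacent D b a := by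
  obtain ⟨P, hP, P', hP', h1, h2, h3, h4, ht⟩ := h
  exact ⟨P', hP', P, hP, h3, h4, h1, h2, fun k hk => (ht k hk).symm⟩

lemma domAdjacent_of_adj {D : Set (Pref A)} {a b : A} (h : (adjGraph D).Adj a b) :
    DomAdjacent D a b := by
  rw [adjGraph, SimpleGraph.fromRel_adj] at h
  exact h.2.elim id DomAdjacent.symm

lemma IsCycleIn.adj_add_one {G : SimpleGraph A} {n : ℕ} {x : Fin (n + 1) → A}
    (h : IsCycleIn G x) (k : Fin (n + 1)) : G.Adj (x k) (x (k + 1)) := by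
  by_cases hk : k = Fin.last n
  · rw [hk, Fin.last_add_one]
    exact h.2.2 n.succ_pos
  · have hk' : k.val + 1 < n + 1 := by have := Fin.val_lt_last hk; omega
    convert h.2.1 k hk' using 2
    exact Fin.ext (Fin.val_add_one_of_lt' hk')

section Vetoes

variable {D : Set (Pref A)} {f : (Fin 2 → Pref A) → A} {i j : Fin 2}

def Vetoes (D : Set (Pref A)) (f : (Fin 2 → Pref A) → A) (i : Fin 2) (a b : A) : Prop :=
  ∀ P ∈ D, ∀ Q ∈ D, peak P = a → f (prof2 i P Q) ≠ b

lemma vetoes_of_apply_prof2_eq_peak (hsp : StrategyProof D f) (hij : i ≠ j) {P₀ Q₀ : Pref A}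
    (hP₀ : P₀ ∈ D) (hQ₀ : Q₀ ∈ D) (hne : peak P₀ ≠ peak Q₀) (h : f (prof2 i P₀ Q₀) = peak P₀) :
    Vetoes D f i (peak P₀) (peak Q₀) := by
  intro P hP Q hQ hpeak hbad
  have hP_wins : f (prof2 i P Q₀) = peak P := hsp.apply_prof2_eq_peak i hP hP₀ hQ₀ (hpeak ▸ h)
  have hQ₀_wins : f (prof2 j Q₀ P) = peak Q₀ := by
    refine hsp.apply_prof2_eq_peak j hQ₀ hQ hP ?_
    rwa [← prof2_comm hij]
  rw [← prof2_comm hij, hP_wins, hpeak] at hQ₀_wins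
  exact hne hQ₀_wins

lemma vetoes_or_vetoes_of_domAdjacent (hrule : IsRule D f) (hsp : StrategyProof D f)
    (hA : 1 < Fintype.card A) (hij : i ≠ j) {a b : A} (hab : DomAdjacent D a b) :
    Vetoes D f i a b ∨ Vetoes D f j b a := by
  obtain ⟨Pa, hPa, Pb, hPb, rfl, rfl, hb, -, -⟩ := hab
  have hne : peak Pa ≠ peak Pb := hb ▸ peak_ne_second hA Pa
  have hunan : f (prof2 i Pb Pb) = second Pa := (hrule.apply_prof2 i hPb hPb rfl).trans hb
  rw [← hb]
  rcases hsp.apply_prof2_eq_peak_or_eq_second i hA hPa hPb hPb hunan with h | h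
  · exact Or.inl (vetoes_of_apply_prof2_eq_peak hsp hij hPa hPb hne h)
  · rw [prof2_comm hij, ← hb] at h
    exact Or.inr (vetoes_of_apply_prof2_eq_peak hsp hij.symm hPb hPa hne.symm h)

lemma not_vetoes_and_vetoes_of_domAdjacent (hrule : IsRule D f) (hsp : StrategyProof D f)
    (hA : 1 < Fintype.card A) (hij : i ≠ j) {a b c : A} (hac : DomAdjacent D a c)
    (hcb : DomAdjacent D c b) (hab : a ≠ b) (hi : Vetoes D f i a c) (hj : Vetoes D f j b c) :
    False := by
  obtain ⟨Pa, hPa, Pc, hPc, rfl, rfl, hPc₁, hPc₂, hPt⟩ := hac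
  obtain ⟨Qc, hQc, Qb, hQb, hQc₁, hQc₂, hQb₁, hQb₂, hQt⟩ := hcb
  subst hQc₂
  have h₁ : f (prof2 i Pa Qc) = peak Pa := by
    refine (hsp.apply_prof2_eq_peak_or_eq_second i hA hPa hQc hQc ?_).resolve_right
      (hi Pa hPa Qc hQc rfl)
    exact (hrule.apply_prof2 i hQc hQc rfl).trans hQc₁
  have h₂ : f (prof2 i Pa Qb) = f (prof2 i Pa Qc) := by
    rcases hsp.apply_prof2_eq_or_eq_peaks_of_swaps_top_two j hA hQc hQb hPa hQb₁
      (hQb₂.trans hQc₁.symm) hQt with h | ⟨h, -⟩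
    · rw [← prof2_comm hij, ← prof2_comm hij] at h
      exact h.symm
    · rw [← prof2_comm hij, hQc₁] at h
      exact absurd h (hi Pa hPa Qc hQc rfl)
  have h₃ : f (prof2 j Qb Pc) = peak Qb := by
    refine (hsp.apply_prof2_eq_peak_or_eq_second j hA hQb hPc hPc ?_).resolve_right ?_
    · exact (hrule.apply_prof2 j hPc hPc rfl).trans (hPc₁.trans hQb₂.symm)
    · rw [hQb₂]
      exact hj Qb hQb Pc hPc hQb₁
  have h₄ : f (prof2 i Pa Qb) = f (prof2 i Pc Qb) := by
    rcases hsp.apply_prof2_eq_or_eq_peaks_of_swaps_top_two i hA hPa hPc hQb hPc₁ hPc₂ hPt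
      with h | ⟨-, h⟩
    · exact h
    · rw [prof2_comm hij, hPc₁] at h
      exact absurd h (hj Qb hQb Pc hPc hQb₁)
  apply hab
  rw [← h₁, ← h₂, h₄, prof2_comm hij, h₃, hQb₁]

end Vetoes

section Cycle

variable {D : Set (Pref A)} {f : (Fin 2 → Pref A) → A} {i j : Fin 2} {v : ℕ} [NeZero v]
  {y : ZMod v → A}

lemma vetoes_of_vetoes_of_domAdjacent (hrule : IsRule D f) (hsp : StrategyProof D f)
    (hA : 1 < Fintype.card A) (hij : i ≠ j) {a b c : A} (hac : DomAdjacent D a c)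
    (hcb : DomAdjacent D c b) (hab : a ≠ b) (hi : Vetoes D f i a c) : Vetoes D f i c b :=
  (vetoes_or_vetoes_of_domAdjacent hrule hsp hA hij hcb).resolve_right
    (not_vetoes_and_vetoes_of_domAdjacent hrule hsp hA hij hac hcb hab hi)

lemma forall_vetoes_add_one_of_vetoes (hrule : IsRule D f) (hsp : StrategyProof D f)
    (hA : 1 < Fintype.card A) (hij : i ≠ j) (hadj : ∀ k, DomAdjacent D (y k) (y (k + 1)))
    (hne : ∀ k, y k ≠ y (k + 1 + 1)) {k₀ : ZMod v} (h₀ : Vetoes D f i (y k₀) (y (k₀ + 1)))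
    (k : ZMod v) : Vetoes D f i (y k) (y (k + 1)) := by
  have hstep : ∀ n : ℕ, Vetoes D f i (y (k₀ + n)) (y (k₀ + n + 1)) := by
    intro n
    induction n with
    | zero => simpa using h₀
    | succ n ih =>
      rw [Nat.cast_succ, ← add_assoc]
      exact vetoes_of_vetoes_of_domAdjacent hrule hsp hA hij (hadj _) (hadj _) (hne _) ih
  simpa using hstep (k - k₀).val

lemma apply_prof2_eq_peak_of_vetoes_cycle (hrule : IsRule D f) (hsp : StrategyProof D f)
    (hA : 1 < Fintype.card A) (hadj : ∀ k, DomAdjacent D (y k) (y (k + 1)))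
    (hveto : ∀ k, Vetoes D f i (y k) (y (k + 1))) {P Q : Pref A} (hP : P ∈ D) (hQ : Q ∈ D)
    (hPy : peak P ∈ Set.range y) (hQy : peak Q ∈ Set.range y) :
    f (prof2 i P Q) = peak P := by
  suffices h : ∀ n : ℕ, ∀ k, ∀ P ∈ D, peak P = y k → peak Q = y (k + n) →
      f (prof2 i P Q) = peak P by
    obtain ⟨k, hk⟩ := hPy
    obtain ⟨l, hl⟩ := hQy
    exact h (l - k).val k P hP hk.symm (by simpa using hl.symm)
  intro n
  induction n with
  | zero =>
    intro k P hP hk hQk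
    exact hrule.apply_prof2 i hP hQ (by simpa [hk] using hQk)
  | succ n ih =>
    intro k P hP hk hQk
    obtain ⟨Pk, hPk, Pk', hPk', hPk₁, hPk₂, hPk'₁, -, -⟩ := hadj k
    have h₁ : f (prof2 i Pk' Q) = second Pk :=
      (ih (k + 1) Pk' hPk' hPk'₁ (by rw [hQk]; push_cast; ring_nf)).trans (hPk'₁.trans hPk₂.symm)
    have h₂ : f (prof2 i Pk Q) = peak Pk := by
      refine (hsp.apply_prof2_eq_peak_or_eq_second i hA hPk hPk' hQ h₁).resolve_right ?_
      rw [hPk₂]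
      exact hveto k Pk hPk Q hQ hPk₁
    exact hsp.apply_prof2_eq_peak i hP hPk hQ (h₂.trans (hPk₁.trans hk.symm))

lemma dictatorOn_of_vetoes_cycle (hrule : IsRule D f) (hsp : StrategyProof D f)
    (hA : 1 < Fintype.card A) (hij : i ≠ j) (hadj : ∀ k, DomAdjacent D (y k) (y (k + 1)))
    (hveto : ∀ k, Vetoes D f i (y k) (y (k + 1))) : DictatorOn D f (Set.range y) := by
  refine ⟨i, fun R hR hRy => ?_⟩
  calc f R = f (prof2 i (R i) (R j)) := by rw [prof2_eta hij]
    _ = peak (R i) :=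
      apply_prof2_eq_peak_of_vetoes_cycle hrule hsp hA hadj hveto (hR i) (hR j) (hRy i) (hRy j)

lemma dictatorOn_of_vetoes_reverse_cycle (hrule : IsRule D f) (hsp : StrategyProof D f)
    (hA : 1 < Fintype.card A) (hij : i ≠ j) (hadj : ∀ k, DomAdjacent D (y k) (y (k + 1)))
    (hveto : ∀ k, Vetoes D f i (y (k + 1)) (y k)) : DictatorOn D f (Set.range y) := by
  have e : ∀ k : ZMod v, -(k + 1) + 1 = -k := fun k => by ring
  rw [← neg_surjective.range_comp y]
  refine dictatorOn_of_vetoes_cycle hrule hsp hA hij (fun k => ?_) (fun k => ?_)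
  · simpa [e] using (hadj (-(k + 1))).symm
  · simpa [e] using hveto (-(k + 1))

end Cycle

lemma ZMod.add_one_add_one_ne_self {m : ℕ} (hm : 3 ≤ m) (k : ZMod m) : k + 1 + 1 ≠ k := by
  rw [add_assoc, Ne, add_eq_left, one_add_one_eq_two]
  exact_mod_cast (ZMod.natCast_eq_zero_iff 2 m).not.mpr (Nat.not_dvd_of_pos_of_lt two_pos hm)

theorem stmt16_dictatorship_on_cycle_general (D : Set (Pref A))
    (f : (Fin 2 → Pref A) → A) (hrule : IsRule D f) (hsp : StrategyProof D f)
    (v : ℕ) (hv : 3 ≤ v) (x : Fin v → A) (hcyc : IsCycleIn (adjGraph D) x) :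
    DictatorOn D f (Set.range x) := by
  have hA : 1 < Fintype.card A := by
    have := Fintype.card_le_of_injective x hcyc.1
    rw [Fintype.card_fin] at this
    omega
  obtain ⟨n, rfl⟩ : ∃ n, v = n + 1 := ⟨v - 1, by omega⟩
  -- `ZMod (n + 1)` is `Fin (n + 1)` by definition, so this only re-indexes the cycle cyclically.
  let y : ZMod (n + 1) → A := x
  have hadj : ∀ k, DomAdjacent D (y k) (y (k + 1)) :=
    fun k => domAdjacent_of_adj (hcyc.adj_add_one k)
  have hinj : Function.Injective y := hcyc.1
  have hne : ∀ k, y k ≠ y (k + 1 + 1) :=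
    fun k h => ZMod.add_one_add_one_ne_self hv k (hinj h).symm
  by_cases h₀ : ∃ k, Vetoes D f 0 (y k) (y (k + 1))
  · obtain ⟨k₀, hk₀⟩ := h₀
    exact dictatorOn_of_vetoes_cycle hrule hsp hA zero_ne_one hadj
      (forall_vetoes_add_one_of_vetoes hrule hsp hA zero_ne_one hadj hne hk₀)
  · push Not at h₀
    exact dictatorOn_of_vetoes_reverse_cycle hrule hsp hA one_ne_zero hadj fun k =>
      (vetoes_or_vetoes_of_domAdjacent hrule hsp hA zero_ne_one (hadj k)).resolve_left (h₀ k)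

/-- Observation 1: every two-voter strategy-proof rule behaves
like a dictatorship on a cycle of the adjacency graph. -/
theorem stmt16_dictatorship_on_cycle (D : Set (Pref A)) (hD : D.Nonempty)
    (hcard : 3 ≤ Fintype.card A) (hpc : PathConnectedDom D)
    (f : (Fin 2 → Pref A) → A) (hrule : IsRule D f) (hsp : StrategyProof D f)
    (v : ℕ) (hv : 3 ≤ v) (x : Fin v → A) (hcyc : IsCycleIn (adjGraph D) x) :
    DictatorOn D f (Set.range x) :=
  stmt16_dictatorship_on_cycle_general D f hrule hsp v hv x hcyc
end

section
/- Fix two voters N = {1, 2}, a domain D and a tops-only, strategy-proof rule f : D^2 → A; by the tops-only property write f(a, b) for the common value of f at any profile where voter 1's peak is a and voter 2's peak is b. Let π = (x_1, …, x_v) with v ≥ 3 be a path in the adjacency graph G_∼, and suppose f(x_1, x_v) = x_k̲ and f(x_v, x_1) = x_k̄ for indices k̲, k̄ ∈ {1, …, v}. Then for all s, t ∈ {1, …, v}, writing med(p, q, r) for the median of three integers: (i) if k̲ < k̄, then f(x_s, x_t) = x_s whenever k̲ ≤ s ≤ k̄, f(x_s, x_t) = x_{med(s, t, k̲)} whenever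 s < k̲, and f(x_s, x_t) = x_{med(s, t, k̄)} whenever s > k̄; (ii) if k̲ > k̄, then f(x_s, x_t) = x_t whenever k̄ ≤ t ≤ k̲, f(x_s, x_t) = x_{med(s, t, k̄)} whenever t < k̄, and f(x_s, x_t) = x_{med(s, t, k̲)} whenever t > k̲; (iii) if k̲ = k̄ = k*, then f(x_s, x_t) = x_{med(s, t, k*)} for all s, t. -/
open Classical

set_option linter.unusedSectionVars false
set_option linter.unusedVariables false

variable {A : Type*} [Fintype A] [DecidableEq A] [Nonempty A]

section Aux
variable {A : Type*}

lemma lineMin (v : ℕ) (xN c : ℕ → A)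
    (inj : ∀ i j, i < v → j < v → xN i = xN j → i = j)
    (t : ℕ) (htv : t < v) (hbase : c t = xN t)
    (hstep : ∀ s, s + 1 < v → (c (s+1) = c s ∨ (c s = xN s ∧ c (s+1) = xN (s+1))))
    (M : ℕ) (hMv : M < v) (hM : c (v-1) = xN M) :
    ∀ s, t ≤ s → s < v → c s = xN (min s M) := by
  have R1 : ∀ t₀, t₀ < v → c t₀ = xN t₀ → ∀ s, t₀ ≤ s → s < v →
      ∃ m, t₀ ≤ m ∧ m ≤ s ∧ c s = xN m := by
    intro t₀ ht₀ hb s hts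
    induction s, hts using Nat.le_induction with
    | base => exact fun _ => ⟨t₀, le_refl _, le_refl _, hb⟩
    | succ s hts ih =>
      intro hsv
      obtain ⟨m, hm1, hm2, hm3⟩ := ih (by omega)
      rcases hstep s hsv with h | h
      · exact ⟨m, hm1, by omega, h.trans hm3⟩
      · exact ⟨s+1, by omega, le_refl _, h.2⟩
  have R2 : ∀ s, t ≤ s → s < v → c s ≠ xN s → ∀ u, s ≤ u → u < v → c u = c s := by
    intro s hts hsv hne u hsu
    induction u, hsu using Nat.le_induction with
    | base => exact fun _ => rfl
    | succ u hsu ih =>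
      intro huv
      have hu : c u = c s := ih (by omega)
      rcases hstep u huv with h | h
      · rw [h, hu]
      · exfalso
        obtain ⟨m, hm1, hm2, hm3⟩ := R1 t htv hbase s hts hsv
        have hms : m ≠ s := fun e => hne (e ▸ hm3)
        have hmu : xN m = xN u := by rw [← hm3, ← hu, h.1]
        have := inj m u (by omega) (by omega) hmu
        omega
  intro s hts hsv
  rcases le_or_gt s M with hsM | hMs
  · rw [min_eq_left hsM]
    by_contra hne
    obtain ⟨m, hm1, hm2, hm3⟩ := R1 t htv hbase s hts hsv
    have hms : m ≠ s := fun e => hne (e ▸ hm3)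
    have h1 : c (v-1) = c s := R2 s hts hsv hne (v-1) (by omega) (by omega)
    have hMm : xN M = xN m := by rw [← hM, h1, hm3]
    have := inj M m hMv (by omega) hMm
    omega
  · rw [min_eq_right (le_of_lt hMs)]
    obtain ⟨m, hm1, hm2, hm3⟩ := R1 t htv hbase s hts hsv
    by_cases hms : m = s
    · exfalso
      have hss : c s = xN s := hms ▸ hm3
      obtain ⟨m', hm1', hm2', hm3'⟩ := R1 s hsv hss (v-1) (by omega) (by omega)
      have := inj M m' hMv (by omega) (by rw [← hM, hm3'])
      omega
    · have hne : c s ≠ xN s := by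
        rw [hm3]; intro h; exact hms (inj m s (by omega) hsv h)
      have h1 : c (v-1) = c s := R2 s hts hsv hne (v-1) (by omega) (by omega)
      have hMm : xN M = xN m := by rw [← hM, h1, hm3]
      have := inj M m hMv (by omega) hMm
      rw [hm3]; congr 1; omega

lemma lineMax (v : ℕ) (xN c : ℕ → A)
    (inj : ∀ i j, i < v → j < v → xN i = xN j → i = j)
    (t : ℕ) (htv : t < v) (hbase : c t = xN t)
    (hstep : ∀ s, s + 1 < v → (c (s+1) = c s ∨ (c s = xN s ∧ c (s+1) = xN (s+1))))
    (M : ℕ) (hMv : M < v) (hM : c 0 = xN M) :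
    ∀ s, s ≤ t → c s = xN (max s M) := by
  have L1 : ∀ t₀, t₀ < v → c t₀ = xN t₀ → ∀ s, s ≤ t₀ →
      ∃ m, s ≤ m ∧ m ≤ t₀ ∧ c s = xN m := by
    intro t₀ ht₀ hb s hst
    obtain ⟨d, hd⟩ : ∃ d, s + d = t₀ := ⟨t₀ - s, by omega⟩
    clear hst
    induction d generalizing s with
    | zero => exact ⟨t₀, by omega, le_refl _, by rw [show s = t₀ by omega]; exact hb⟩
    | succ d ih =>
      obtain ⟨m, h1, h2, h3⟩ := ih (s+1) (by omega)
      rcases hstep s (by omega) with h | h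
      · exact ⟨m, by omega, h2, by rw [← h3, ← h]⟩
      · exact ⟨s, le_refl _, by omega, h.1⟩
  have L2 : ∀ s, s ≤ t → c s ≠ xN s → ∀ u, u ≤ s → c u = c s := by
    intro s hst hne u hus
    obtain ⟨d, hd⟩ : ∃ d, u + d = s := ⟨s - u, by omega⟩
    clear hus
    induction d generalizing u with
    | zero => rw [show u = s by omega]
    | succ d ih =>
      have hu1 : c (u+1) = c s := ih (u+1) (by omega)
      rcases hstep u (by omega) with h | h
      · rw [← h, hu1]
      · exfalso
        obtain ⟨m, hm1, hm2, hm3⟩ := L1 t htv hbase s hst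
        have hsm : xN m = xN (u+1) := by rw [← hm3, ← hu1, h.2]
        have := inj m (u+1) (by omega) (by omega) hsm
        have hmeq : m = s := by omega
        exact hne (hmeq ▸ hm3)
  intro s hst
  rcases le_or_gt M s with hMs | hsM
  · rw [max_eq_left hMs]
    by_contra hne
    obtain ⟨m, hm1, hm2, hm3⟩ := L1 t htv hbase s hst
    have hms : m ≠ s := fun e => hne (e ▸ hm3)
    have h1 : c 0 = c s := L2 s hst hne 0 (by omega)
    have hMm : xN M = xN m := by rw [← hM, h1, hm3]
    have := inj M m hMv (by omega) hMm
    omega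
  · rw [max_eq_right (le_of_lt hsM)]
    obtain ⟨m, hm1, hm2, hm3⟩ := L1 t htv hbase s hst
    by_cases hms : m = s
    · exfalso
      have hss : c s = xN s := hms ▸ hm3
      obtain ⟨m', hm1', hm2', hm3'⟩ := L1 s (by omega) hss 0 (by omega)
      have := inj M m' hMv (by omega) (by rw [← hM, hm3'])
      omega
    · have hne : c s ≠ xN s := by
        rw [hm3]; intro h; exact hms (inj m s (by omega) (by omega) h)
      have h1 : c 0 = c s := L2 s hst hne 0 (by omega)
      have hMm : xN M = xN m := by rw [← hM, h1, hm3]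
      have := inj M m hMv (by omega) hMm
      rw [hm3]; congr 1; omega

end Aux

lemma swap_top_two (hc : 2 ≤ Fintype.card A) (P P' : Pref A) (a b : A)
    (hP0 : peak P = a) (hP1 : second P = b) (hQ0 : peak P' = b) (hQ1 : second P' = a)
    (htail : ∀ k, 2 ≤ k → rk P k = rk P' k)
    (y z : A) (h1 : prefers P y z) (h2 : prefers P' z y) : y = a ∧ z = b := by
  have h0n : 0 < Fintype.card A := by omega
  have h1n : 1 < Fintype.card A := by omega
  have ha : P ⟨0, h0n⟩ = a := by rw [← hP0]; unfold peak rk; rw [dif_pos h0n]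
  have hb : P ⟨1, h1n⟩ = b := by rw [← hP1]; unfold second rk; rw [dif_pos h1n]
  have hb' : P' ⟨0, h0n⟩ = b := by rw [← hQ0]; unfold peak rk; rw [dif_pos h0n]
  have ha' : P' ⟨1, h1n⟩ = a := by rw [← hQ1]; unfold second rk; rw [dif_pos h1n]
  have key : ∀ w : A, (P'.symm w : ℕ) =
      (if (P.symm w : ℕ) = 0 then 1 else if (P.symm w : ℕ) = 1 then 0 else (P.symm w : ℕ)) := by
    intro w
    have hw : P (P.symm w) = w := P.apply_symm_apply w
    by_cases hi0 : (P.symm w : ℕ) = 0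
    · have : P.symm w = ⟨0, h0n⟩ := Fin.ext hi0
      rw [this] at hw
      have : P'.symm w = ⟨1, h1n⟩ := by
        rw [Equiv.symm_apply_eq, ha', ← hw, ha]
      rw [this]; simp [hi0]
    · by_cases hi1 : (P.symm w : ℕ) = 1
      · have : P.symm w = ⟨1, h1n⟩ := Fin.ext hi1
        rw [this] at hw
        have : P'.symm w = ⟨0, h0n⟩ := by
          rw [Equiv.symm_apply_eq, hb', ← hw, hb]
        rw [this]; simp [hi0, hi1]
      · have h2i : 2 ≤ (P.symm w : ℕ) := by omega
        have hlt : (P.symm w : ℕ) < Fintype.card A := (P.symm w).isLt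
        have ht := htail (P.symm w : ℕ) h2i
        unfold rk at ht
        rw [dif_pos hlt, dif_pos hlt] at ht
        have hPw : P ⟨(P.symm w : ℕ), hlt⟩ = w := by
          rw [show (⟨(P.symm w : ℕ), hlt⟩ : Fin (Fintype.card A)) = P.symm w from Fin.ext rfl, hw]
        have : P'.symm w = ⟨(P.symm w : ℕ), hlt⟩ := by
          rw [Equiv.symm_apply_eq, ← ht, hPw]
        rw [this]; simp [hi0, hi1]
  have k1 := key y
  have k2 := key z
  have h1' : (P.symm y : ℕ) < (P.symm z : ℕ) := h1
  have h2' : (P'.symm z : ℕ) < (P'.symm y : ℕ) := h2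
  rw [k1] at h2'; rw [k2] at h2'
  have hy0 : (P.symm y : ℕ) = 0 ∧ (P.symm z : ℕ) = 1 := by
    split_ifs at h2' <;> omega
  have hy : P.symm y = ⟨0, h0n⟩ := Fin.ext hy0.1
  have hz : P.symm z = ⟨1, h1n⟩ := Fin.ext hy0.2
  constructor
  · rw [← ha, ← hy, P.apply_symm_apply]
  · rw [← hb, ← hz, P.apply_symm_apply]


/-- Lemma 6: full description, via medians, of a two-voter,
tops-only, strategy-proof rule along a path of the adjacency graph, in terms of
its values at the two extreme-peak profiles. -/
theorem stmt19_rfbr (D : Set (Pref A)) (hD : D.Nonempty)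
    (hcard : 3 ≤ Fintype.card A)
    (f : (Fin 2 → Pref A) → A) (hrule : IsRule D f) (hto : TopsOnly D f)
    (hsp : StrategyProof D f)
    (v : ℕ) (hv : 3 ≤ v) (x : Fin v → A) (hpath : IsPathIn (adjGraph D) x)
    (kl ku : Fin v)
    (hkl : ∀ P1 ∈ D, ∀ P2 ∈ D, peak P1 = x ⟨0, by omega⟩ →
      peak P2 = x ⟨v - 1, by omega⟩ → f ![P1, P2] = x kl)
    (hku : ∀ P1 ∈ D, ∀ P2 ∈ D, peak P1 = x ⟨v - 1, by omega⟩ →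
      peak P2 = x ⟨0, by omega⟩ → f ![P1, P2] = x ku) :
    ∀ s t : Fin v, ∀ P1 ∈ D, ∀ P2 ∈ D, peak P1 = x s → peak P2 = x t →
      ((kl < ku →
        ((kl ≤ s → s ≤ ku → f ![P1, P2] = x s) ∧
         (s < kl → ∃ k : Fin v, (k : ℕ) = med3 s t kl ∧ f ![P1, P2] = x k) ∧
         (ku < s → ∃ k : Fin v, (k : ℕ) = med3 s t ku ∧ f ![P1, P2] = x k))) ∧
       (ku < kl →
        ((ku ≤ t → t ≤ kl → f ![P1, P2] = x t) ∧
         (t < ku → ∃ k : Fin v, (k : ℕ) = med3 s t ku ∧ f ![P1, P2] = x k) ∧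
         (kl < t → ∃ k : Fin v, (k : ℕ) = med3 s t kl ∧ f ![P1, P2] = x k))) ∧
       (kl = ku → ∃ k : Fin v, (k : ℕ) = med3 s t kl ∧ f ![P1, P2] = x k)) := by

  classical
  have hv1 : 1 ≤ v := by omega
  have h2c : 2 ≤ Fintype.card A := by omega
  have hklv : (kl:ℕ) < v := kl.isLt
  have hkuv : (ku:ℕ) < v := ku.isLt
  set xN : ℕ → A := fun s => if h : s < v then x ⟨s, h⟩ else x ⟨0, by omega⟩ with hxNdef
  have hxN : ∀ (s : ℕ) (h : s < v), xN s = x ⟨s, h⟩ := by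
    intro s h; simp only [hxNdef]; exact dif_pos h
  have hinj : ∀ i j, i < v → j < v → xN i = xN j → i = j := by
    intro i j hi hj h
    rw [hxN i hi, hxN j hj] at h
    exact congrArg Fin.val (hpath.1 h)
  have hxval : ∀ k : Fin v, xN (k : ℕ) = x k := by
    intro k; rw [hxN _ k.isLt]
  have hadj : ∀ k, k + 1 < v → ∃ P ∈ D, ∃ P' ∈ D,
      peak P = xN k ∧ second P = xN (k+1) ∧ peak P' = xN (k+1) ∧ second P' = xN k ∧
      ∀ j, 2 ≤ j → rk P j = rk P' j := by
    intro k hk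
    have h := hpath.2 k hk
    simp only [adjGraph, SimpleGraph.fromRel_adj] at h
    rcases h.2 with h | h
    · obtain ⟨P, hP, P', hP', h1, h2, h3, h4, h5⟩ := h
      refine ⟨P, hP, P', hP', ?_, ?_, ?_, ?_, h5⟩
      · rw [hxN k (by omega)]; exact h1
      · rw [hxN (k+1) hk]; exact h2
      · rw [hxN (k+1) hk]; exact h3
      · rw [hxN k (by omega)]; exact h4
    · obtain ⟨P, hP, P', hP', h1, h2, h3, h4, h5⟩ := h
      refine ⟨P', hP', P, hP, ?_, ?_, ?_, ?_, fun j hj => (h5 j hj).symm⟩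
      · rw [hxN k (by omega)]; exact h3
      · rw [hxN (k+1) hk]; exact h4
      · rw [hxN (k+1) hk]; exact h1
      · rw [hxN k (by omega)]; exact h2
  have hpeakex : ∀ s : ℕ, ∃ P ∈ D, (s < v → peak P = xN s) := by
    intro s
    by_cases hs : s < v
    · rcases Nat.lt_or_ge (s+1) v with h | h
      · obtain ⟨P, hP, P', hP', h1, _, _, _, _⟩ := hadj s h
        exact ⟨P, hP, fun _ => h1⟩
      · obtain ⟨P, hP, P', hP', _, _, h3, _, _⟩ := hadj (s-1) (by omega)
        refine ⟨P', hP', fun _ => ?_⟩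
        rw [h3]; congr 1; omega
    · obtain ⟨P, hP⟩ := hD; exact ⟨P, hP, fun h => absurd h hs⟩
  choose Qf hQfD hQfpk using hpeakex
  have hdom2 : ∀ P1 P2 : Pref A, P1 ∈ D → P2 ∈ D → InDom D ![P1, P2] := by
    intro P1 P2 h1 h2 i; fin_cases i <;> simpa
  have hFto : ∀ (s t : ℕ), s < v → t < v → ∀ P1 ∈ D, ∀ P2 ∈ D,
      peak P1 = xN s → peak P2 = xN t → f ![P1, P2] = f ![Qf s, Qf t] := by
    intro s t hs ht P1 h1 P2 h2 hp1 hp2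
    apply hto _ _ (hdom2 _ _ h1 h2) (hdom2 _ _ (hQfD s) (hQfD t))
    intro i; fin_cases i
    · simp only [Fin.mk_zero, Fin.mk_one, Matrix.cons_val_zero, Matrix.cons_val_one, Matrix.head_cons]; rw [hp1, hQfpk s hs]
    · simp only [Fin.mk_zero, Fin.mk_one, Matrix.cons_val_zero, Matrix.cons_val_one, Matrix.head_cons]; rw [hp2, hQfpk t ht]
  have hdiag : ∀ s, s < v → f ![Qf s, Qf s] = xN s := by
    intro s hs
    refine hrule ![Qf s, Qf s] (hdom2 _ _ (hQfD s) (hQfD s)) (xN s) ?_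
    intro i; fin_cases i
    · simp only [Fin.mk_zero, Fin.mk_one, Matrix.cons_val_zero, Matrix.cons_val_one, Matrix.head_cons]; exact hQfpk s hs
    · simp only [Fin.mk_zero, Fin.mk_one, Matrix.cons_val_zero, Matrix.cons_val_one, Matrix.head_cons]; exact hQfpk s hs
  have hupd0 : ∀ P1 P2 Q : Pref A, Function.update ![P1, P2] 0 Q = ![Q, P2] := by
    intro P1 P2 Q; funext i; fin_cases i <;> simp [Function.update]
  have hupd1 : ∀ P1 P2 Q : Pref A, Function.update ![P1, P2] 1 Q = ![P1, Q] := by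
    intro P1 P2 Q; funext i; fin_cases i <;> simp [Function.update]
  have hedge0 : ∀ (a b : A) (P P' Q : Pref A), P ∈ D → P' ∈ D → Q ∈ D →
      peak P = a → second P = b → peak P' = b → second P' = a →
      (∀ j, 2 ≤ j → rk P j = rk P' j) →
      (f ![P', Q] = f ![P, Q] ∨ (f ![P, Q] = a ∧ f ![P', Q] = b)) := by
    intro a b P P' Q hP hP' hQ h1 h2 h3 h4 h5
    by_cases heq : f ![P, Q] = f ![P', Q]
    · exact Or.inl heq.symm
    · right
      have s1 := hsp ![P, Q] (hdom2 _ _ hP hQ) 0 P' hP'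
      rw [hupd0] at s1
      have s2 := hsp ![P', Q] (hdom2 _ _ hP' hQ) 0 P hP
      rw [hupd0] at s2
      have p1 : prefers P (f ![P, Q]) (f ![P', Q]) := by
        rcases s1 with h | h
        · exact absurd h heq
        · simpa using h
      have p2 : prefers P' (f ![P', Q]) (f ![P, Q]) := by
        rcases s2 with h | h
        · exact absurd h.symm heq
        · simpa using h
      exact swap_top_two h2c P P' a b h1 h2 h3 h4 h5 _ _ p1 p2
  have hedge1 : ∀ (a b : A) (P P' Q : Pref A), P ∈ D → P' ∈ D → Q ∈ D →
      peak P = a → second P = b → peak P' = b → second P' = a →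
      (∀ j, 2 ≤ j → rk P j = rk P' j) →
      (f ![Q, P'] = f ![Q, P] ∨ (f ![Q, P] = a ∧ f ![Q, P'] = b)) := by
    intro a b P P' Q hP hP' hQ h1 h2 h3 h4 h5
    by_cases heq : f ![Q, P] = f ![Q, P']
    · exact Or.inl heq.symm
    · right
      have s1 := hsp ![Q, P] (hdom2 _ _ hQ hP) 1 P' hP'
      rw [hupd1] at s1
      have s2 := hsp ![Q, P'] (hdom2 _ _ hQ hP') 1 P hP
      rw [hupd1] at s2
      have p1 : prefers P (f ![Q, P]) (f ![Q, P']) := by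
        rcases s1 with h | h
        · exact absurd h heq
        · simpa using h
      have p2 : prefers P' (f ![Q, P']) (f ![Q, P]) := by
        rcases s2 with h | h
        · exact absurd h.symm heq
        · simpa using h
      exact swap_top_two h2c P P' a b h1 h2 h3 h4 h5 _ _ p1 p2
  have hrowstep : ∀ t, t < v → ∀ k, k + 1 < v →
      (f ![Qf (k+1), Qf t] = f ![Qf k, Qf t] ∨
        (f ![Qf k, Qf t] = xN k ∧ f ![Qf (k+1), Qf t] = xN (k+1))) := by
    intro t ht k hk
    obtain ⟨P, hP, P', hP', h1, h2, h3, h4, h5⟩ := hadj k hk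
    have e1 : f ![P, Qf t] = f ![Qf k, Qf t] :=
      hFto k t (by omega) ht P hP (Qf t) (hQfD t) h1 (hQfpk t ht)
    have e2 : f ![P', Qf t] = f ![Qf (k+1), Qf t] :=
      hFto (k+1) t hk ht P' hP' (Qf t) (hQfD t) h3 (hQfpk t ht)
    rcases hedge0 (xN k) (xN (k+1)) P P' (Qf t) hP hP' (hQfD t) h1 h2 h3 h4 h5 with h | h
    · left; rw [← e1, ← e2, h]
    · right; rw [← e1, ← e2]; exact h
  have hcolstep : ∀ s, s < v → ∀ k, k + 1 < v →
      (f ![Qf s, Qf (k+1)] = f ![Qf s, Qf k] ∨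
        (f ![Qf s, Qf k] = xN k ∧ f ![Qf s, Qf (k+1)] = xN (k+1))) := by
    intro s hs k hk
    obtain ⟨P, hP, P', hP', h1, h2, h3, h4, h5⟩ := hadj k hk
    have e1 : f ![Qf s, P] = f ![Qf s, Qf k] :=
      hFto s k hs (by omega) (Qf s) (hQfD s) P hP (hQfpk s hs) h1
    have e2 : f ![Qf s, P'] = f ![Qf s, Qf (k+1)] :=
      hFto s (k+1) hs hk (Qf s) (hQfD s) P' hP' (hQfpk s hs) h3
    rcases hedge1 (xN k) (xN (k+1)) P P' (Qf s) hP hP' (hQfD s) h1 h2 h3 h4 h5 with h | h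
    · left; rw [← e1, ← e2, h]
    · right; rw [← e1, ← e2]; exact h
  have hKL : f ![Qf 0, Qf (v-1)] = xN (kl : ℕ) := by
    rw [hxval kl]
    exact hkl (Qf 0) (hQfD 0) (Qf (v-1)) (hQfD (v-1))
      ((hQfpk 0 (by omega)).trans (hxN 0 (by omega)))
      ((hQfpk (v-1) (by omega)).trans (hxN (v-1) (by omega)))
  have hKU : f ![Qf (v-1), Qf 0] = xN (ku : ℕ) := by
    rw [hxval ku]
    exact hku (Qf (v-1)) (hQfD (v-1)) (Qf 0) (hQfD 0)
      ((hQfpk (v-1) (by omega)).trans (hxN (v-1) (by omega)))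
      ((hQfpk 0 (by omega)).trans (hxN 0 (by omega)))
  have hcol0 : ∀ t, t < v → f ![Qf 0, Qf t] = xN (min t (kl:ℕ)) := by
    intro t ht
    exact lineMin v xN (fun t' => f ![Qf 0, Qf t']) hinj 0 (by omega) (hdiag 0 (by omega))
      (fun k hk => hcolstep 0 (by omega) k hk) (kl:ℕ) hklv hKL t (by omega) ht
  have hcolV : ∀ t, t < v → f ![Qf (v-1), Qf t] = xN (max t (ku:ℕ)) := by
    intro t ht
    exact lineMax v xN (fun t' => f ![Qf (v-1), Qf t']) hinj (v-1) (by omega)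
      (hdiag (v-1) (by omega))
      (fun k hk => hcolstep (v-1) (by omega) k hk) (ku:ℕ) hkuv hKU t (by omega)
  have hrowR : ∀ s t, t < v → t ≤ s → s < v →
      f ![Qf s, Qf t] = xN (min s (max t (ku:ℕ))) := by
    intro s t ht hts hs
    exact lineMin v xN (fun s' => f ![Qf s', Qf t]) hinj t ht (hdiag t ht)
      (fun k hk => hrowstep t ht k hk) (max t (ku:ℕ)) (by omega) (hcolV t ht) s hts hs
  have hrowL : ∀ s t, t < v → s ≤ t →
      f ![Qf s, Qf t] = xN (max s (min t (kl:ℕ))) := by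
    intro s t ht hst
    exact lineMax v xN (fun s' => f ![Qf s', Qf t]) hinj t ht (hdiag t ht)
      (fun k hk => hrowstep t ht k hk) (min t (kl:ℕ)) (by omega) (hcol0 t ht) s hst
  intro s t P1 hP1 P2 hP2 hpk1 hpk2
  have hsv : (s:ℕ) < v := s.isLt
  have htv : (t:ℕ) < v := t.isLt
  have hfF : f ![P1, P2] = f ![Qf (s:ℕ), Qf (t:ℕ)] :=
    hFto s t hsv htv P1 hP1 P2 hP2 (hpk1.trans (hxval s).symm) (hpk2.trans (hxval t).symm)
  have hmain : ∀ m : ℕ, m < v →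
      (((s:ℕ) ≤ (t:ℕ) ∧ max (s:ℕ) (min (t:ℕ) (kl:ℕ)) = m) ∨
       ((t:ℕ) ≤ (s:ℕ) ∧ min (s:ℕ) (max (t:ℕ) (ku:ℕ)) = m)) →
      f ![P1, P2] = xN m := by
    intro m hmv hm
    rw [hfF]
    rcases hm with ⟨h, e⟩ | ⟨h, e⟩
    · rw [hrowL (s:ℕ) (t:ℕ) htv h, e]
    · rw [hrowR (s:ℕ) (t:ℕ) htv h hsv, e]
  refine ⟨?_, ?_, ?_⟩
  · intro hklku
    have hklku' : (kl:ℕ) < (ku:ℕ) := hklku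
    refine ⟨?_, ?_, ?_⟩
    · intro h1 h2
      have h1' : (kl:ℕ) ≤ (s:ℕ) := h1
      have h2' : (s:ℕ) ≤ (ku:ℕ) := h2
      rw [← hxval s]
      rcases le_total (s:ℕ) (t:ℕ) with h | h
      · exact hmain (s:ℕ) hsv (Or.inl ⟨h, by omega⟩)
      · exact hmain (s:ℕ) hsv (Or.inr ⟨h, by omega⟩)
    · intro h1
      have h1' : (s:ℕ) < (kl:ℕ) := h1
      have hb : med3 (s:ℕ) (t:ℕ) (kl:ℕ) < v := by simp only [med3]; omega
      refine ⟨⟨_, hb⟩, rfl, ?_⟩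
      rw [← hxN _ hb]
      rcases le_total (s:ℕ) (t:ℕ) with h | h
      · exact hmain _ hb (Or.inl ⟨h, by simp only [med3]; omega⟩)
      · exact hmain _ hb (Or.inr ⟨h, by simp only [med3]; omega⟩)
    · intro h1
      have h1' : (ku:ℕ) < (s:ℕ) := h1
      have hb : med3 (s:ℕ) (t:ℕ) (ku:ℕ) < v := by simp only [med3]; omega
      refine ⟨⟨_, hb⟩, rfl, ?_⟩
      rw [← hxN _ hb]
      rcases le_total (s:ℕ) (t:ℕ) with h | h
      · exact hmain _ hb (Or.inl ⟨h, by simp only [med3]; omega⟩)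
      · exact hmain _ hb (Or.inr ⟨h, by simp only [med3]; omega⟩)
  · intro hkukl
    have hkukl' : (ku:ℕ) < (kl:ℕ) := hkukl
    refine ⟨?_, ?_, ?_⟩
    · intro h1 h2
      have h1' : (ku:ℕ) ≤ (t:ℕ) := h1
      have h2' : (t:ℕ) ≤ (kl:ℕ) := h2
      rw [← hxval t]
      rcases le_total (s:ℕ) (t:ℕ) with h | h
      · exact hmain (t:ℕ) htv (Or.inl ⟨h, by omega⟩)
      · exact hmain (t:ℕ) htv (Or.inr ⟨h, by omega⟩)
    · intro h1
      have h1' : (t:ℕ) < (ku:ℕ) := h1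
      have hb : med3 (s:ℕ) (t:ℕ) (ku:ℕ) < v := by simp only [med3]; omega
      refine ⟨⟨_, hb⟩, rfl, ?_⟩
      rw [← hxN _ hb]
      rcases le_total (s:ℕ) (t:ℕ) with h | h
      · exact hmain _ hb (Or.inl ⟨h, by simp only [med3]; omega⟩)
      · exact hmain _ hb (Or.inr ⟨h, by simp only [med3]; omega⟩)
    · intro h1
      have h1' : (kl:ℕ) < (t:ℕ) := h1
      have hb : med3 (s:ℕ) (t:ℕ) (kl:ℕ) < v := by simp only [med3]; omega
      refine ⟨⟨_, hb⟩, rfl, ?_⟩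
      rw [← hxN _ hb]
      rcases le_total (s:ℕ) (t:ℕ) with h | h
      · exact hmain _ hb (Or.inl ⟨h, by simp only [med3]; omega⟩)
      · exact hmain _ hb (Or.inr ⟨h, by simp only [med3]; omega⟩)
  · intro hkleq
    have hkleq' : (kl:ℕ) = (ku:ℕ) := congrArg Fin.val hkleq
    have hb : med3 (s:ℕ) (t:ℕ) (kl:ℕ) < v := by simp only [med3]; omega
    refine ⟨⟨_, hb⟩, rfl, ?_⟩
    rw [← hxN _ hb]
    rcases le_total (s:ℕ) (t:ℕ) with h | h
    · exact hmain _ hb (Or.inl ⟨h, by simp only [med3]; omega⟩)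
    · exact hmain _ hb (Or.inr ⟨h, by simp only [med3]; omega⟩)
end
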